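/- Let 1 ≤ p < ∞. For every f ∈ L^p(𝕋), ‖S_n^a(f)‖_p ≤ ((1+|a|)/(1-|a|))^{2/p} Λ_n ‖f‖_p, where Λ_n is the Lebesgue constant. -/

import Mathlib

open Real MeasureTheory

/-- The Dirichlet kernel `D_n(u) = sin((n+1/2)u)/sin(u/2)`. -/
noncomputable def dirichlet (n : ℕ) (u : ℝ) : ℝ :=
  Real.sin (((n : ℝ) + 1 / 2) * u) / Real.sin (u / 2)

/-- The Lebesgue constant `Λ_n`. -/
noncomputable def lebesgueConst (n : ℕ) : ℝ :=
  (1 / (2 * π)) * ∫ t in (-π)..π, |dirichlet n t|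

/-- The nonlinear Fourier partial sum written through the Dirichlet kernel,
where `F = f ∘ θ⁻¹`. -/
noncomputable def kernelPartialSum (θ : ℝ → ℝ) (F : ℝ → ℂ) (n : ℕ) (x : ℝ) : ℂ :=
  (1 / (2 * π) : ℂ) * ∫ t in (-π)..π, F (θ x + t) * (dirichlet n t : ℂ)

/-- The normalized `L^p` norm on one period. -/
noncomputable def pNorm (p : ℝ) (g : ℝ → ℂ) : ℝ :=
  ((1 / (2 * π)) * ∫ t in (-π)..π, ‖g t‖ ^ p) ^ (1 / p)

/-!
Write `S(x) = (2π)⁻¹ ∫ F(θ x + t) D_n(t) dt`. Jensen's inequality for the finite measure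
`|D_n(t)| dt`, of mass `2π Λ_n`, bounds `|S(x)|^p` by `(2π)^{-p} (2π Λ_n)^{p-1}` times
`∫ |F(θ x + t)|^p |D_n(t)| dt`. Integrating in `x` and exchanging the integrals leaves the shifted
integrals `∫ |f(θ⁻¹(θ x + t))|^p dx`. The map `x ↦ θ⁻¹(θ x + t)` commutes with translation by `2π`
and has derivative `θ'(x) / θ'(θ⁻¹(θ x + t)) ≥ ((1 - |a|)/(1 + |a|))²`, so a change of variables
bounds each of them by `((1 + |a|)/(1 - |a|))² ∫ |f|^p`. All estimates are made for lower Lebesgue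
integrals, where no integrability has to be tracked.
-/

open Set Function
open scoped ENNReal

theorem Function.Periodic.setLIntegral_Ioc_add_eq {g : ℝ → ℝ≥0∞} {T : ℝ} (hg : Periodic g T)
    (hT : 0 < T) (t s : ℝ) :
    ∫⁻ x in Ioc t (t + T), g x = ∫⁻ x in Ioc s (s + T), g x := by
  have : VAddInvariantMeasure (AddSubgroup.zmultiples T) ℝ volume :=
    ⟨fun c s _ => measure_preimage_add _ _ _⟩
  exact IsAddFundamentalDomain.setLIntegral_eq (isAddFundamentalDomain_Ioc hT t)
    (isAddFundamentalDomain_Ioc hT s) g hg.map_vadd_zmultiples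

theorem setLIntegral_Ioc_comp_le {φ φ' : ℝ → ℝ} {c : ℝ} (hc : 0 < c)
    (hφ : ∀ x, HasDerivAt φ (φ' x) x) (hφ' : ∀ x, c ≤ φ' x) (g : ℝ → ℝ≥0∞) (a b : ℝ) :
    ∫⁻ x in Ioc a b, g (φ x) ≤ ENNReal.ofReal c⁻¹ * ∫⁻ u in Ioc (φ a) (φ b), g u := by
  have hmono : StrictMono φ := strictMono_of_hasDerivAt_pos hφ fun x => hc.trans_le (hφ' x)
  calc ∫⁻ x in Ioc a b, g (φ x)
      ≤ ∫⁻ x in Ioc a b, ENNReal.ofReal c⁻¹ * (ENNReal.ofReal |φ' x| * g (φ x)) := by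
        refine lintegral_mono fun x => ?_
        have h1 : 1 ≤ ENNReal.ofReal c⁻¹ * ENNReal.ofReal |φ' x| := by
          rw [← ENNReal.ofReal_mul (by positivity), ← ENNReal.ofReal_one]
          refine ENNReal.ofReal_le_ofReal ?_
          rw [abs_of_pos (hc.trans_le (hφ' x)), le_inv_mul_iff₀ hc, mul_one]
          exact hφ' x
        calc g (φ x) = 1 * g (φ x) := (one_mul _).symm
          _ ≤ _ := by rw [← mul_assoc]; gcongr
    _ = ENNReal.ofReal c⁻¹ * ∫⁻ u in φ '' Ioc a b, g u := by
        rw [lintegral_const_mul' _ _ ENNReal.ofReal_ne_top,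
          lintegral_image_eq_lintegral_abs_deriv_mul measurableSet_Ioc
            (fun x _ => (hφ x).hasDerivWithinAt) hmono.injective.injOn]
    _ ≤ _ := by
        gcongr
        exact hmono.image_Ioc_subset

theorem lintegral_mul_rpow_le {α : Type*} [MeasurableSpace α] {μ : Measure α} {p : ℝ}
    (hp : 1 ≤ p) {G w : α → ℝ≥0∞} (hG : AEMeasurable G μ) (hw : AEMeasurable w μ) :
    (∫⁻ a, G a * w a ∂μ) ^ p ≤ (∫⁻ a, w a ∂μ) ^ (p - 1) * ∫⁻ a, G a ^ p * w a ∂μ := by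
  have hp0 : 0 < p := by linarith
  have hq : 0 ≤ 1 - 1 / p := sub_nonneg.2 (div_le_one_of_le₀ hp hp0.le)
  have hHolder := ENNReal.lintegral_mul_norm_pow_le ((hG.pow_const p).mul hw) hw
    (one_div_nonneg.2 hp0.le) hq (add_sub_cancel _ _)
  have hGw : ∀ a, (G a ^ p * w a) ^ (1 / p) * w a ^ (1 - 1 / p) = G a * w a := fun a => by
    rw [ENNReal.mul_rpow_of_nonneg _ _ (by positivity), ← ENNReal.rpow_mul,
      mul_one_div_cancel hp0.ne', ENNReal.rpow_one, mul_assoc,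
      ← ENNReal.rpow_add_of_nonneg _ _ (by positivity) hq, add_sub_cancel, ENNReal.rpow_one]
  simp only [Pi.mul_apply, hGw] at hHolder
  calc (∫⁻ a, G a * w a ∂μ) ^ p
      ≤ ((∫⁻ a, G a ^ p * w a ∂μ) ^ (1 / p) * (∫⁻ a, w a ∂μ) ^ (1 - 1 / p)) ^ p := by
        gcongr
    _ = _ := by
      rw [ENNReal.mul_rpow_of_nonneg _ _ hp0.le, ← ENNReal.rpow_mul, ← ENNReal.rpow_mul,
        one_div_mul_cancel hp0.ne', ENNReal.rpow_one, sub_mul, one_div_mul_cancel hp0.ne',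
        one_mul, mul_comm]

theorem lintegral_rpow_lintegral_mul_le {α β : Type*} [MeasurableSpace α] [MeasurableSpace β]
    {μ : Measure α} {ν : Measure β} [SFinite μ] [SFinite ν] {p : ℝ} (hp : 1 ≤ p)
    {H : α → β → ℝ≥0∞} (hH : Measurable (uncurry H)) {w : β → ℝ≥0∞} (hw : Measurable w)
    {K : ℝ≥0∞} (hK : ∀ t, ∫⁻ x, H x t ^ p ∂μ ≤ K) :
    ∫⁻ x, (∫⁻ t, H x t * w t ∂ν) ^ p ∂μ ≤ (∫⁻ t, w t ∂ν) ^ p * K := by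
  set W := ∫⁻ t, w t ∂ν
  have hHp : Measurable (uncurry fun x t => H x t ^ p * w t) :=
    (hH.pow_const p).mul (hw.comp measurable_snd)
  calc ∫⁻ x, (∫⁻ t, H x t * w t ∂ν) ^ p ∂μ
      ≤ ∫⁻ x, W ^ (p - 1) * ∫⁻ t, H x t ^ p * w t ∂ν ∂μ := lintegral_mono fun x =>
        lintegral_mul_rpow_le hp (hH.of_uncurry_left).aemeasurable hw.aemeasurable
    _ = W ^ (p - 1) * ∫⁻ t, (∫⁻ x, H x t ^ p ∂μ) * w t ∂ν := by
        have hm : Measurable fun x => ∫⁻ t, H x t ^ p * w t ∂ν := hHp.lintegral_prod_right'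
        rw [lintegral_const_mul _ hm, lintegral_lintegral_swap hHp.aemeasurable]
        congr 1
        exact lintegral_congr fun t => lintegral_mul_const _ (hH.of_uncurry_right.pow_const p)
    _ ≤ W ^ (p - 1) * ∫⁻ t, K * w t ∂ν := by gcongr with t; exact hK t
    _ = W ^ p * K := by
        have hWp : W ^ (p - 1) * W = W ^ p := by
          nth_rw 2 [← ENNReal.rpow_one W]
          rw [← ENNReal.rpow_add_of_nonneg _ _ (by linarith) zero_le_one, sub_add_cancel]
        rw [lintegral_const_mul _ hw, ← hWp]
        ring

theorem StrictMono.continuous_of_rightInverse {α β : Type*} [LinearOrder α] [TopologicalSpace α]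
    [OrderTopology α] [DenselyOrdered α] [LinearOrder β] [TopologicalSpace β] [OrderTopology β]
    {θ : α → β} {θinv : β → α} (hθ : StrictMono θ) (h₁ : LeftInverse θinv θ)
    (h₂ : RightInverse θinv θ) : Continuous θinv :=
  Monotone.continuous_of_surjective (fun s u h => hθ.le_iff_le.1 (by rwa [h₂, h₂])) h₁.surjective

theorem setLIntegral_comp_phaseShift_le {θ θ' θinv : ℝ → ℝ} {C T : ℝ} (hC : 0 < C) (hT : 0 < T)
    (hθ : ∀ x, HasDerivAt θ (θ' x) x) (hθ' : ∀ x, θ' x ∈ Icc C⁻¹ C)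
    (hper : ∀ x, θ (x + T) = θ x + T) (h₁ : LeftInverse θinv θ) (h₂ : RightInverse θinv θ)
    {g : ℝ → ℝ≥0∞} (hg : Periodic g T) (a t : ℝ) :
    ∫⁻ x in Ioc a (a + T), g (θinv (θ x + t)) ≤
      ENNReal.ofReal (C ^ 2) * ∫⁻ x in Ioc a (a + T), g x := by
  have hθpos : ∀ x, 0 < θ' x := fun x => (inv_pos.2 hC).trans_le (hθ' x).1
  have hcont : Continuous θinv :=
    (strictMono_of_hasDerivAt_pos hθ hθpos).continuous_of_rightInverse h₁ h₂
  have hinv : ∀ s, HasDerivAt θinv (θ' (θinv s))⁻¹ s := fun s =>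
    (hθ _).of_local_left_inverse hcont.continuousAt (hθpos _).ne' (.of_forall h₂)
  have hinvper : ∀ s, θinv (s + T) = θinv s + T := fun s => by
    rw [← h₁ (θinv s + T), hper, h₂]
  set φ := fun x => θinv (θ x + t)
  have hφ : ∀ x, HasDerivAt φ ((θ' (φ x))⁻¹ * θ' x) x := fun x =>
    (hinv _).comp x ((hθ x).add_const t)
  have hφ' : ∀ x, (C ^ 2)⁻¹ ≤ (θ' (φ x))⁻¹ * θ' x := fun x => by
    rw [sq, mul_inv]
    exact mul_le_mul (inv_anti₀ (hθpos _) (hθ' _).2) (hθ' x).1 (inv_nonneg.2 hC.le)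
      (inv_nonneg.2 (hθpos _).le)
  have hφT : φ (a + T) = φ a + T := by simp only [φ]; rw [hper, add_right_comm, hinvper]
  calc ∫⁻ x in Ioc a (a + T), g (φ x)
      ≤ ENNReal.ofReal (C ^ 2)⁻¹⁻¹ * ∫⁻ u in Ioc (φ a) (φ (a + T)), g u :=
        setLIntegral_Ioc_comp_le (by positivity) hφ hφ' g a (a + T)
    _ = ENNReal.ofReal (C ^ 2) * ∫⁻ x in Ioc a (a + T), g x := by
        rw [inv_inv, hφT, hg.setLIntegral_Ioc_add_eq hT]

theorem Real.abs_sin_nat_mul_le (m : ℕ) (x : ℝ) : |sin (m * x)| ≤ m * |sin x| := by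
  induction m with
  | zero => simp
  | succ k ih =>
    rw [Nat.cast_succ, add_mul, one_mul, sin_add]
    calc |sin (k * x) * cos x + cos (k * x) * sin x|
        ≤ |sin (k * x)| * |cos x| + |cos (k * x)| * |sin x| := by
          rw [← abs_mul, ← abs_mul]; exact abs_add_le _ _
      _ ≤ k * |sin x| * 1 + 1 * |sin x| := by
          gcongr
          exacts [abs_cos_le_one x, abs_cos_le_one _]
      _ = (k + 1) * |sin x| := by ring

theorem abs_dirichlet_le (n : ℕ) (u : ℝ) : |dirichlet n u| ≤ 2 * n + 1 := by
  rw [dirichlet, abs_div]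
  rcases eq_or_ne (sin (u / 2)) 0 with h | h
  · simp only [h, abs_zero, div_zero]; positivity
  rw [div_le_iff₀ (abs_pos.2 h)]
  have h2 : ((n : ℝ) + 1 / 2) * u = ((2 * n + 1 : ℕ) : ℝ) * (u / 2) := by push_cast; ring
  rw [h2]
  exact_mod_cast abs_sin_nat_mul_le (2 * n + 1) (u / 2)

@[fun_prop]
theorem measurable_dirichlet (n : ℕ) : Measurable (dirichlet n) := by
  unfold dirichlet; fun_prop

theorem integrableOn_dirichlet (n : ℕ) {s : Set ℝ} (hs : volume s ≠ ⊤) :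
    IntegrableOn (dirichlet n) s :=
  Measure.integrableOn_of_bounded (M := 2 * n + 1) hs
    (measurable_dirichlet n).aestronglyMeasurable (ae_of_all _ fun u => abs_dirichlet_le n u)

theorem lebesgueConst_nonneg (n : ℕ) : 0 ≤ lebesgueConst n :=
  mul_nonneg (by positivity)
    (intervalIntegral.integral_nonneg (by linarith [pi_pos]) fun _ _ => abs_nonneg _)

theorem ofReal_lebesgueConst (n : ℕ) :
    ENNReal.ofReal (lebesgueConst n) =
      ‖(1 / (2 * π) : ℂ)‖ₑ * ∫⁻ t in Ioc (-π) π, ‖(dirichlet n t : ℂ)‖ₑ := by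
  have hint : IntegrableOn (fun t => |dirichlet n t|) (Ioc (-π) π) :=
    (integrableOn_dirichlet n measure_Ioc_lt_top.ne).abs
  rw [lebesgueConst, ENNReal.ofReal_mul (by positivity),
    intervalIntegral.integral_of_le (by linarith [pi_pos]),
    ofReal_integral_eq_lintegral_ofReal hint (ae_of_all _ fun t => abs_nonneg _)]
  congr 1
  · rw [← ofReal_norm, norm_div, norm_one, norm_mul, Complex.norm_two, Complex.norm_real,
      Real.norm_of_nonneg pi_pos.le]
  · exact lintegral_congr fun t => by rw [← ofReal_norm, Complex.norm_real, Real.norm_eq_abs]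

theorem setLIntegral_enorm_kernelPartialSum_rpow_le {θ : ℝ → ℝ} {F : ℝ → ℂ} (hθ : Measurable θ)
    (hF : Measurable F) {p : ℝ} (hp : 1 ≤ p) {K : ℝ≥0∞}
    (hK : ∀ t, ∫⁻ x in Ioc (-π) π, ‖F (θ x + t)‖ₑ ^ p ≤ K) (n : ℕ) :
    ∫⁻ x in Ioc (-π) π, ‖kernelPartialSum θ F n x‖ₑ ^ p ≤
      ENNReal.ofReal (lebesgueConst n) ^ p * K := by
  set c : ℝ≥0∞ := ‖(1 / (2 * π) : ℂ)‖ₑ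
  set w : ℝ → ℝ≥0∞ := fun t => ‖(dirichlet n t : ℂ)‖ₑ
  have hp0 : 0 ≤ p := by linarith
  have hS : ∀ x, ‖kernelPartialSum θ F n x‖ₑ ≤
      c * ∫⁻ t in Ioc (-π) π, ‖F (θ x + t)‖ₑ * w t := fun x => by
    rw [kernelPartialSum, enorm_mul, intervalIntegral.integral_of_le (by linarith [pi_pos])]
    gcongr
    simpa only [enorm_mul] using
      enorm_integral_le_lintegral_enorm fun t => F (θ x + t) * (dirichlet n t : ℂ)
  have hH : Measurable (uncurry fun x t => ‖F (θ x + t)‖ₑ) := by fun_prop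
  calc ∫⁻ x in Ioc (-π) π, ‖kernelPartialSum θ F n x‖ₑ ^ p
      ≤ ∫⁻ x in Ioc (-π) π, c ^ p * (∫⁻ t in Ioc (-π) π, ‖F (θ x + t)‖ₑ * w t) ^ p :=
        lintegral_mono fun x => by
          rw [← ENNReal.mul_rpow_of_nonneg _ _ hp0]; gcongr; exact hS x
    _ = c ^ p * ∫⁻ x in Ioc (-π) π, (∫⁻ t in Ioc (-π) π, ‖F (θ x + t)‖ₑ * w t) ^ p :=
        lintegral_const_mul' _ _ (ENNReal.rpow_ne_top_of_nonneg hp0 enorm_ne_top)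
    _ ≤ c ^ p * ((∫⁻ t in Ioc (-π) π, w t) ^ p * K) := by
        gcongr
        exact lintegral_rpow_lintegral_mul_le hp hH (by fun_prop) hK
    _ = ENNReal.ofReal (lebesgueConst n) ^ p * K := by
        rw [← mul_assoc, ← ENNReal.mul_rpow_of_nonneg _ _ hp0, ofReal_lebesgueConst]

theorem pNorm_le_of_setLIntegral_le {p M : ℝ} (hp : 0 < p) (hM : 0 ≤ M) {f g : ℝ → ℂ}
    (hf : IntervalIntegrable (fun t => ‖f t‖ ^ p) volume (-π) π)
    (h : ∫⁻ t in Ioc (-π) π, ‖g t‖ₑ ^ p ≤ ENNReal.ofReal M * ∫⁻ t in Ioc (-π) π, ‖f t‖ₑ ^ p) :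
    pNorm p g ≤ M ^ (1 / p) * pNorm p f := by
  have hle : -π ≤ π := by linarith [pi_pos]
  have henorm : ∀ h : ℝ → ℂ, ∀ t, ‖h t‖ₑ ^ p = ENNReal.ofReal (‖h t‖ ^ p) := fun h t => by
    rw [← ofReal_norm, ENNReal.ofReal_rpow_of_nonneg (norm_nonneg _) hp.le]
  have hfI : ENNReal.ofReal (∫ t in (-π)..π, ‖f t‖ ^ p) = ∫⁻ t in Ioc (-π) π, ‖f t‖ₑ ^ p := by
    rw [intervalIntegral.integral_of_le hle, ofReal_integral_eq_lintegral_ofReal hf.1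
      (ae_of_all _ fun t => by positivity)]
    simp only [henorm]
  -- only an inequality: without measurability of `g` the Bochner integral is the junk value `0`
  have hgI : ∫ t in (-π)..π, ‖g t‖ ^ p ≤ (∫⁻ t in Ioc (-π) π, ‖g t‖ₑ ^ p).toReal := by
    rw [intervalIntegral.integral_of_le hle]
    refine (Real.le_norm_self _).trans ((norm_integral_le_lintegral_norm _).trans_eq ?_)
    simp only [henorm, norm_rpow_of_nonneg (norm_nonneg _), norm_norm]
  have hI_nonneg : ∀ h : ℝ → ℂ, 0 ≤ ∫ t in (-π)..π, ‖h t‖ ^ p := fun h =>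
    intervalIntegral.integral_nonneg hle fun t _ => by positivity
  have hint : ∫ t in (-π)..π, ‖g t‖ ^ p ≤ M * ∫ t in (-π)..π, ‖f t‖ ^ p := by
    refine hgI.trans ?_
    have hfin : ENNReal.ofReal M * ∫⁻ t in Ioc (-π) π, ‖f t‖ₑ ^ p ≠ ⊤ :=
      ENNReal.mul_ne_top ENNReal.ofReal_ne_top (hfI ▸ ENNReal.ofReal_ne_top)
    calc (∫⁻ t in Ioc (-π) π, ‖g t‖ₑ ^ p).toReal
        ≤ (ENNReal.ofReal M * ∫⁻ t in Ioc (-π) π, ‖f t‖ₑ ^ p).toReal := ENNReal.toReal_mono hfin h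
      _ = M * ∫ t in (-π)..π, ‖f t‖ ^ p := by
        rw [ENNReal.toReal_mul, ← hfI, ENNReal.toReal_ofReal hM,
          ENNReal.toReal_ofReal (hI_nonneg f)]
  unfold pNorm
  calc ((1 / (2 * π)) * ∫ t in (-π)..π, ‖g t‖ ^ p) ^ (1 / p)
      ≤ (M * ((1 / (2 * π)) * ∫ t in (-π)..π, ‖f t‖ ^ p)) ^ (1 / p) := by
        gcongr ?_ ^ _
        · exact mul_nonneg (by positivity) (hI_nonneg g)
        · rw [mul_left_comm]; gcongr
    _ = M ^ (1 / p) * ((1 / (2 * π)) * ∫ t in (-π)..π, ‖f t‖ ^ p) ^ (1 / p) :=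
        Real.mul_rpow hM (mul_nonneg (by positivity) (hI_nonneg f))

theorem partial_sum_Lp_norm_bound_general
    (a : ℂ) (ha : ‖a‖ < 1)
    (θ : ℝ → ℝ)
    (hper : ∀ t : ℝ, θ (t + 2 * π) = θ t + 2 * π)
    (hθd : Differentiable ℝ θ)
    (hbounds : ∀ t : ℝ, (1 - ‖a‖) / (1 + ‖a‖) ≤ deriv θ t ∧
      deriv θ t ≤ (1 + ‖a‖) / (1 - ‖a‖))
    (θinv : ℝ → ℝ) (hinv₁ : ∀ t, θinv (θ t) = t) (hinv₂ : ∀ t, θ (θinv t) = t)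
    (p : ℝ) (hp : 1 ≤ p)
    (f : ℝ → ℂ) (hfm : Measurable f) (hfper : Function.Periodic f (2 * π))
    (hfp : IntervalIntegrable (fun t => ‖f t‖ ^ p) MeasureTheory.volume (-π) π)
    (n : ℕ) :
    pNorm p (kernelPartialSum θ (f ∘ θinv) n) ≤
      ((1 + ‖a‖) / (1 - ‖a‖)) ^ (2 / p) * lebesgueConst n * pNorm p f := by
  set C := (1 + ‖a‖) / (1 - ‖a‖)
  have hp0 : 0 < p := by linarith
  have hC : 0 < C := div_pos (by linarith [norm_nonneg a]) (by linarith)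
  have hθ' : ∀ x, deriv θ x ∈ Icc C⁻¹ C := fun x => by rw [inv_div]; exact hbounds x
  have hθinv : Continuous θinv :=
    (strictMono_of_deriv_pos fun x => (inv_pos.2 hC).trans_le (hθ' x).1).continuous_of_rightInverse
      hinv₁ hinv₂
  have hshift : ∀ t, ∫⁻ x in Ioc (-π) π, ‖(f ∘ θinv) (θ x + t)‖ₑ ^ p ≤
      ENNReal.ofReal (C ^ 2) * ∫⁻ x in Ioc (-π) π, ‖f x‖ₑ ^ p := fun t => by
    have := setLIntegral_comp_phaseShift_le hC two_pi_pos (fun x => (hθd x).hasDerivAt) hθ' hper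
      hinv₁ hinv₂ (g := fun u => ‖f u‖ₑ ^ p) (fun u => by simp only [hfper u]) (-π) t
    rwa [show -π + 2 * π = π by ring] at this
  have hLp := setLIntegral_enorm_kernelPartialSum_rpow_le hθd.continuous.measurable
    (hfm.comp hθinv.measurable) hp hshift n
  have hΛ := lebesgueConst_nonneg n
  calc pNorm p (kernelPartialSum θ (f ∘ θinv) n)
      ≤ (lebesgueConst n ^ p * C ^ 2) ^ (1 / p) * pNorm p f := by
        refine pNorm_le_of_setLIntegral_le hp0 (by positivity) hfp ?_
        rwa [ENNReal.ofReal_mul (by positivity), ← ENNReal.ofReal_rpow_of_nonneg hΛ hp0.le,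
          mul_assoc]
    _ = C ^ (2 / p) * lebesgueConst n * pNorm p f := by
        rw [Real.mul_rpow (by positivity) (by positivity), ← Real.rpow_mul hΛ,
          mul_one_div_cancel hp0.ne', Real.rpow_one, ← Real.rpow_natCast, ← Real.rpow_mul hC.le]
        ring_nf

theorem partial_sum_Lp_norm_bound
    (a : ℂ) (ha : ‖a‖ < 1)
    (θ : ℝ → ℝ) (hθc : Continuous θ) (hθm : StrictMono θ)
    (hper : ∀ t : ℝ, θ (t + 2 * π) = θ t + 2 * π)
    (hθd : Differentiable ℝ θ)
    (hbounds : ∀ t : ℝ, (1 - ‖a‖) / (1 + ‖a‖) ≤ deriv θ t ∧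
      deriv θ t ≤ (1 + ‖a‖) / (1 - ‖a‖))
    (θinv : ℝ → ℝ) (hinv₁ : ∀ t, θinv (θ t) = t) (hinv₂ : ∀ t, θ (θinv t) = t)
    (p : ℝ) (hp : 1 ≤ p)
    (f : ℝ → ℂ) (hfm : Measurable f) (hfper : Function.Periodic f (2 * π))
    (hfi : IntervalIntegrable f MeasureTheory.volume (-π) π)
    (hfp : IntervalIntegrable (fun t => ‖f t‖ ^ p) MeasureTheory.volume (-π) π)
    (n : ℕ) :
    pNorm p (kernelPartialSum θ (f ∘ θinv) n) ≤
      ((1 + ‖a‖) / (1 - ‖a‖)) ^ (2 / p) * lebesgueConst n * pNorm p f :=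
  partial_sum_Lp_norm_bound_general a ha θ hper hθd hbounds θinv hinv₁ hinv₂ p hp f hfm hfper hfp n
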